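/- Let g : ℝ → ℝ be integrable with g(x) = 0 for all x ∉ [−1, 1], and let θ* ∈ Θ_k. Then there exists θ' ∈ Θ_k such that μ'_i ∈ [−1, 1] for all i ∈ {1,…,k} and ‖g − M_{θ'}‖₁ ≤ 5·‖g − M_{θ*}‖₁. -/
import Mathlib


open MeasureTheory

/-- The Gaussian pdf with mean `μ` and precision `τ`. -/
noncomputable def gaussPdf (μ τ x : ℝ) : ℝ :=
  τ / Real.sqrt (2 * Real.pi) * Real.exp (-(τ ^ 2 * (x - μ) ^ 2) / 2)

/-- The pdf of the `k`-GMM with weights `w`, means `μ` and precisions `τ`. -/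
noncomputable def mix {k : ℕ} (w μ τ : Fin k → ℝ) (x : ℝ) : ℝ :=
  ∑ i, w i * gaussPdf (μ i) (τ i) x

open Real Set

lemma gauss_eq (μ τ : ℝ) :
    gaussPdf μ τ = fun x => τ / Real.sqrt (2 * Real.pi) * Real.exp (-(τ^2/2) * (x - μ)^2) := by
  funext x; unfold gaussPdf; ring_nf

lemma gauss_nonneg (μ τ : ℝ) (x : ℝ) (hτ : 0 < τ) : 0 ≤ gaussPdf μ τ x := by
  unfold gaussPdf; positivity

lemma gauss_integrable (μ τ : ℝ) (hτ : 0 < τ) : Integrable (gaussPdf μ τ) := by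
  rw [gauss_eq]
  have hb : (0:ℝ) < τ^2/2 := by positivity
  have h1 : Integrable (fun x : ℝ => Real.exp (-(τ^2/2) * x^2)) := integrable_exp_neg_mul_sq hb
  have h2 : Integrable (fun x : ℝ => Real.exp (-(τ^2/2) * (x - μ)^2)) := by
    simpa using h1.comp_sub_right μ
  exact h2.const_mul _

lemma sqrt_calc (τ : ℝ) (hτ : 0 < τ) :
    τ / Real.sqrt (2 * Real.pi) * Real.sqrt (Real.pi / (τ^2/2)) = 1 := by
  have h1 : Real.pi / (τ^2/2) = 2 * Real.pi / τ^2 := by ring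
  have h2 : Real.sqrt (2 * Real.pi / τ^2) = Real.sqrt (2 * Real.pi) / τ := by
    rw [Real.sqrt_div (by positivity), Real.sqrt_sq hτ.le]
  have hs : Real.sqrt (2 * Real.pi) ≠ 0 := by positivity
  rw [h1, h2]
  field_simp

lemma gauss_total (μ τ : ℝ) (hτ : 0 < τ) : ∫ x, gaussPdf μ τ x = 1 := by
  rw [gauss_eq]
  have hb : (0:ℝ) < τ^2/2 := by positivity
  rw [integral_const_mul]
  have hshift : (∫ x : ℝ, Real.exp (-(τ^2/2) * (x - μ)^2)) =
      ∫ x : ℝ, Real.exp (-(τ^2/2) * x^2) :=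
    integral_sub_right_eq_self (fun x => Real.exp (-(τ^2/2) * x^2)) μ
  rw [hshift, integral_gaussian]
  exact sqrt_calc τ hτ

lemma gauss_tail_Ici (μ τ : ℝ) (hτ : 0 < τ) : ∫ x in Ici μ, gaussPdf μ τ x = 1/2 := by
  rw [integral_Ici_eq_integral_Ioi, gauss_eq]
  have hb : (0:ℝ) < τ^2/2 := by positivity
  rw [integral_const_mul]
  have hshift : (∫ x in Ioi μ, Real.exp (-(τ^2/2) * (x - μ)^2)) =
      ∫ x in Ioi (0:ℝ), Real.exp (-(τ^2/2) * x^2) := by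
    have hmp : MeasurePreserving (fun x : ℝ => x + μ) volume volume :=
      measurePreserving_add_right volume μ
    have hemb : MeasurableEmbedding (fun x : ℝ => x + μ) :=
      (MeasurableEquiv.addRight μ).measurableEmbedding
    have hpre : (fun x : ℝ => x + μ) ⁻¹' (Ioi μ) = Ioi 0 := by
      ext x; simp [Set.mem_Ioi]
    calc (∫ x in Ioi μ, Real.exp (-(τ^2/2) * (x - μ)^2))
        = ∫ x in (fun x : ℝ => x + μ) ⁻¹' (Ioi μ),
            Real.exp (-(τ^2/2) * ((x + μ) - μ)^2) := by
          rw [hmp.setIntegral_preimage_emb hemb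
            (fun x => Real.exp (-(τ^2/2) * (x - μ)^2)) (Ioi μ)]
      _ = ∫ x in Ioi (0:ℝ), Real.exp (-(τ^2/2) * x^2) := by rw [hpre]; simp
  rw [hshift, integral_gaussian_Ioi]
  have h := sqrt_calc τ hτ
  calc τ / Real.sqrt (2 * Real.pi) * (Real.sqrt (Real.pi / (τ^2/2)) / 2)
      = (τ / Real.sqrt (2 * Real.pi) * Real.sqrt (Real.pi / (τ^2/2))) / 2 := by ring
    _ = 1/2 := by rw [h]

lemma gauss_neg (μ τ x : ℝ) : gaussPdf μ τ (-x) = gaussPdf (-μ) τ x := by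
  unfold gaussPdf; ring_nf

lemma gauss_tail_Iic (μ τ : ℝ) (hτ : 0 < τ) : ∫ x in Iic μ, gaussPdf μ τ x = 1/2 := by
  have hmp : MeasurePreserving (fun x : ℝ => -x) volume volume :=
    Measure.measurePreserving_neg volume
  have hemb : MeasurableEmbedding (fun x : ℝ => -x) :=
    (MeasurableEquiv.neg ℝ).measurableEmbedding
  have hpre : (fun x : ℝ => -x) ⁻¹' (Iic μ) = Ici (-μ) := by
    ext x; simp
  have h := hmp.setIntegral_preimage_emb hemb (gaussPdf μ τ) (Iic μ)
  rw [hpre] at h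
  rw [← h]
  simp_rw [gauss_neg]
  exact gauss_tail_Ici (-μ) τ hτ

lemma gauss_tail_compl (μ₀ τ : ℝ) (hτ : 0 < τ) (hm : μ₀ ∉ Icc (-1:ℝ) 1) :
    1/2 ≤ ∫ x in (Icc (-1:ℝ) 1)ᶜ, gaussPdf μ₀ τ x := by
  have hint := (gauss_integrable μ₀ τ hτ)
  have hnn : 0 ≤ᵐ[(volume : Measure ℝ).restrict ((Icc (-1:ℝ) 1)ᶜ)] gaussPdf μ₀ τ :=
    Filter.Eventually.of_forall (fun x => gauss_nonneg μ₀ τ x hτ)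
  rw [Set.mem_Icc, not_and_or, not_le, not_le] at hm
  rcases hm with hm | hm
  · have hsub : Iic μ₀ ⊆ (Icc (-1:ℝ) 1)ᶜ := by
      intro x hx; simp only [Set.mem_compl_iff, Set.mem_Icc, not_and_or, not_le]
      left; exact lt_of_le_of_lt (Set.mem_Iic.mp hx) hm
    calc (1:ℝ)/2 = ∫ x in Iic μ₀, gaussPdf μ₀ τ x := (gauss_tail_Iic μ₀ τ hτ).symm
      _ ≤ _ := setIntegral_mono_set hint.integrableOn hnn hsub.eventuallyLE
  · have hsub : Ici μ₀ ⊆ (Icc (-1:ℝ) 1)ᶜ := by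
      intro x hx; simp only [Set.mem_compl_iff, Set.mem_Icc, not_and_or, not_le]
      right; exact lt_of_lt_of_le hm (Set.mem_Ici.mp hx)
    calc (1:ℝ)/2 = ∫ x in Ici μ₀, gaussPdf μ₀ τ x := (gauss_tail_Ici μ₀ τ hτ).symm
      _ ≤ _ := setIntegral_mono_set hint.integrableOn hnn hsub.eventuallyLE

theorem stmt9 (k : ℕ) (g : ℝ → ℝ) (hgint : Integrable g)
    (hgsupp : ∀ x, x ∉ Set.Icc (-1 : ℝ) 1 → g x = 0)
    (w μ τ : Fin k → ℝ) (hw : ∀ i, 0 ≤ w i) (hws : ∑ i, w i = 1) (hτ : ∀ i, 0 < τ i) :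
    ∃ w' μ' τ' : Fin k → ℝ,
      (∀ i, 0 ≤ w' i) ∧ (∑ i, w' i = 1) ∧ (∀ i, 0 < τ' i) ∧
      (∀ i, μ' i ∈ Set.Icc (-1 : ℝ) 1) ∧
      (∫ x, |g x - mix w' μ' τ' x|) ≤ 5 * ∫ x, |g x - mix w μ τ x| := by
  classical
  set μ' : Fin k → ℝ := fun i => max (-1) (min 1 (μ i)) with hμ'def
  refine ⟨w, μ', τ, hw, hws, hτ, fun i => ⟨le_max_left _ _,
    max_le (by norm_num) (min_le_left _ _)⟩, ?_⟩
  set N : Fin k → ℝ → ℝ := fun i => gaussPdf (μ i) (τ i) with hN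
  set N' : Fin k → ℝ → ℝ := fun i => gaussPdf (μ' i) (τ i) with hN'
  have hNint : ∀ i, Integrable (N i) := fun i => gauss_integrable _ _ (hτ i)
  have hN'int : ∀ i, Integrable (N' i) := fun i => gauss_integrable _ _ (hτ i)
  have hNnn : ∀ i x, 0 ≤ N i x := fun i x => gauss_nonneg _ _ x (hτ i)
  have hN'nn : ∀ i x, 0 ≤ N' i x := fun i x => gauss_nonneg _ _ x (hτ i)
  have hdint : ∀ i, Integrable (fun x => |N i x - N' i x|) := fun i =>
    ((hNint i).sub (hN'int i)).abs
  have hwdint : ∀ i ∈ Finset.univ, Integrable (fun x => w i * |N i x - N' i x|) := fun i _ =>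
    (hdint i).const_mul (w i)
  have hM : Integrable (mix w μ τ) :=
    integrable_finset_sum (μ := (volume : Measure ℝ)) Finset.univ
      (fun i _ => (hNint i).const_mul (w i))
  have hM' : Integrable (mix w μ' τ) :=
    integrable_finset_sum (μ := (volume : Measure ℝ)) Finset.univ
      (fun i _ => (hN'int i).const_mul (w i))
  have hgood : ∀ i, μ i ∈ Set.Icc (-1:ℝ) 1 → μ' i = μ i := by
    intro i hi
    rcases Set.mem_Icc.mp hi with ⟨h1, h2⟩
    show max (-1) (min 1 (μ i)) = μ i
    rw [min_eq_right h2, max_eq_right h1]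
  have hcomp : ∀ i, (∫ x, |N i x - N' i x|)
      ≤ 2 * (if μ i ∈ Set.Icc (-1:ℝ) 1 then (0:ℝ) else 1) := by
    intro i
    by_cases hi : μ i ∈ Set.Icc (-1:ℝ) 1
    · have hNeq : N' i = N i := by
        show gaussPdf (μ' i) (τ i) = gaussPdf (μ i) (τ i)
        rw [hgood i hi]
      rw [if_pos hi, hNeq]
      simp
    · rw [if_neg hi]
      have h2 : (∫ x, |N i x - N' i x|) ≤ ∫ x, (N i x + N' i x) := by
        apply integral_mono (hdint i) ((hNint i).add (hN'int i))
        intro x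
        calc |N i x - N' i x| ≤ |N i x| + |N' i x| := abs_sub _ _
          _ = N i x + N' i x := by rw [abs_of_nonneg (hNnn i x), abs_of_nonneg (hN'nn i x)]
      rw [integral_add (hNint i) (hN'int i)] at h2
      rw [hN, hN'] at h2
      rw [gauss_total _ _ (hτ i), gauss_total _ _ (hτ i)] at h2
      linarith
  have hMM' : (∫ x, |mix w μ τ x - mix w μ' τ x|)
      ≤ ∑ i, w i * (2 * (if μ i ∈ Set.Icc (-1:ℝ) 1 then (0:ℝ) else 1)) := by
    have hptw : ∀ x, |mix w μ τ x - mix w μ' τ x| ≤ ∑ i, w i * |N i x - N' i x| := by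
      intro x
      have hsum : mix w μ τ x - mix w μ' τ x = ∑ i, (w i * N i x - w i * N' i x) := by
        rw [Finset.sum_sub_distrib]; rfl
      rw [hsum]
      calc |∑ i, (w i * N i x - w i * N' i x)| ≤ ∑ i, |w i * N i x - w i * N' i x| :=
            Finset.abs_sum_le_sum_abs _ _
        _ = ∑ i, w i * |N i x - N' i x| := by
            apply Finset.sum_congr rfl; intro i _
            rw [← mul_sub, abs_mul, abs_of_nonneg (hw i)]
    have hRint : Integrable (fun x => ∑ i, w i * |N i x - N' i x|) :=
      integrable_finset_sum _ hwdint
    calc (∫ x, |mix w μ τ x - mix w μ' τ x|)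
        ≤ ∫ x, ∑ i, w i * |N i x - N' i x| :=
          integral_mono (hM.sub hM').abs hRint hptw
      _ = ∑ i, ∫ x, w i * |N i x - N' i x| := integral_finset_sum _ hwdint
      _ = ∑ i, w i * ∫ x, |N i x - N' i x| :=
          Finset.sum_congr rfl (fun i _ => integral_const_mul _ _)
      _ ≤ _ := Finset.sum_le_sum (fun i _ =>
          mul_le_mul_of_nonneg_left (hcomp i) (hw i))
  have hB : ∑ i, w i * (if μ i ∈ Set.Icc (-1:ℝ) 1 then (0:ℝ) else 1)
      ≤ 2 * ∫ x, |g x - mix w μ τ x| := by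
    have hMnn : ∀ x, 0 ≤ mix w μ τ x :=
      fun x => Finset.sum_nonneg (fun i _ => mul_nonneg (hw i) (hNnn i x))
    have hE1 : (∫ x in (Icc (-1:ℝ) 1)ᶜ, |g x - mix w μ τ x|) ≤ ∫ x, |g x - mix w μ τ x| :=
      setIntegral_le_integral (hgint.sub hM).abs
        (Filter.Eventually.of_forall (fun x => abs_nonneg _))
    have hE2 : (∫ x in (Icc (-1:ℝ) 1)ᶜ, |g x - mix w μ τ x|)
        = ∫ x in (Icc (-1:ℝ) 1)ᶜ, mix w μ τ x := by
      apply setIntegral_congr_fun (measurableSet_Icc.compl)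
      intro x hx
      show |g x - mix w μ τ x| = mix w μ τ x
      rw [hgsupp x hx, zero_sub, abs_neg, abs_of_nonneg (hMnn x)]
    have hE3 : (∫ x in (Icc (-1:ℝ) 1)ᶜ, mix w μ τ x)
        = ∑ i, w i * ∫ x in (Icc (-1:ℝ) 1)ᶜ, N i x := by
      calc (∫ x in (Icc (-1:ℝ) 1)ᶜ, mix w μ τ x)
          = ∑ i, ∫ x in (Icc (-1:ℝ) 1)ᶜ, w i * N i x :=
            integral_finset_sum _ (fun i _ => ((hNint i).const_mul (w i)).integrableOn)
        _ = ∑ i, w i * ∫ x in (Icc (-1:ℝ) 1)ᶜ, N i x :=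
            Finset.sum_congr rfl (fun i _ => integral_const_mul _ _)
    have hE4 : ∑ i, w i * ((if μ i ∈ Set.Icc (-1:ℝ) 1 then (0:ℝ) else 1) * (1/2))
        ≤ ∑ i, w i * ∫ x in (Icc (-1:ℝ) 1)ᶜ, N i x := by
      apply Finset.sum_le_sum; intro i _
      apply mul_le_mul_of_nonneg_left _ (hw i)
      by_cases hi : μ i ∈ Set.Icc (-1:ℝ) 1
      · rw [if_pos hi, zero_mul]
        exact setIntegral_nonneg (measurableSet_Icc.compl) (fun x _ => hNnn i x)
      · rw [if_neg hi, one_mul]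
        exact gauss_tail_compl (μ i) (τ i) (hτ i) hi
    have hkey : ∑ i, w i * ((if μ i ∈ Set.Icc (-1:ℝ) 1 then (0:ℝ) else 1) * (1/2))
        ≤ ∫ x, |g x - mix w μ τ x| := by
      calc _ ≤ _ := hE4
        _ = ∫ x in (Icc (-1:ℝ) 1)ᶜ, mix w μ τ x := hE3.symm
        _ = _ := hE2.symm
        _ ≤ _ := hE1
    have heq : ∑ i, w i * ((if μ i ∈ Set.Icc (-1:ℝ) 1 then (0:ℝ) else 1) * (1/2))
        = (∑ i, w i * (if μ i ∈ Set.Icc (-1:ℝ) 1 then (0:ℝ) else 1)) / 2 := by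
      rw [Finset.sum_div]
      exact Finset.sum_congr rfl (fun i _ => by ring)
    rw [heq] at hkey
    linarith
  have h1 : (∫ x, |g x - mix w μ' τ x|)
      ≤ (∫ x, |g x - mix w μ τ x|) + ∫ x, |mix w μ τ x - mix w μ' τ x| := by
    calc (∫ x, |g x - mix w μ' τ x|)
        ≤ ∫ x, (|g x - mix w μ τ x| + |mix w μ τ x - mix w μ' τ x|) :=
          integral_mono (hgint.sub hM').abs ((hgint.sub hM).abs.add (hM.sub hM').abs)
            (fun x => abs_sub_le _ _ _)
      _ = _ := integral_add (hgint.sub hM).abs (hM.sub hM').abs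
  have heq2 : ∑ i, w i * (2 * (if μ i ∈ Set.Icc (-1:ℝ) 1 then (0:ℝ) else 1))
      = 2 * ∑ i, w i * (if μ i ∈ Set.Icc (-1:ℝ) 1 then (0:ℝ) else 1) := by
    rw [Finset.mul_sum]
    exact Finset.sum_congr rfl (fun i _ => by ring)
  rw [heq2] at hMM'
  linarith
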